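/- Let G be a causal-net and S a nonempty set of vertices of G. There exist a causal-net H and a merging λ : G → H having S as the vertex set of one of its fibers if and only if S is a coclique of G. -/

import Mathlib

open CategoryTheory

namespace CausalNets

/-- Acyclicity condition for raw directed-multigraph data: every directed cycle
has length zero. -/
def NoCycleData (V E : Type) (s t : E → V) : Prop :=
  letI : Quiver V := ⟨fun a b => { e : E // s e = a ∧ t e = b }⟩
  ∀ (v : V) (p : Quiver.Path v v), p.length = 0

/-- A causal-net: a finite acyclic directed multigraph (isolated vertices and
parallel edges allowed). -/
structure CausalNet where
  V : Type
  E : Type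
  src : E → V
  tgt : E → V
  fintypeV : Fintype V
  fintypeE : Fintype E
  acyclic : NoCycleData V E src tgt

attribute [instance] CausalNet.fintypeV CausalNet.fintypeE

instance CausalNet.quiver (G : CausalNet) : Quiver G.V :=
  ⟨fun a b => { e : G.E // G.src e = a ∧ G.tgt e = b }⟩

/-- The category `Cau` of causal-nets: a morphism `G ⟶ H` is a functor between
the path categories `Paths G.V ⥤ Paths H.V`. -/
instance : Category CausalNet where
  Hom G H := Paths G.V ⥤ Paths H.V
  id G := 𝟭 (Paths G.V)
  comp φ ψ := φ ⋙ ψ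

variable {G H K : CausalNet}

/-- The action of a morphism of causal-nets on vertices (objects). -/
def vmap (φ : G ⟶ H) : G.V → H.V := (φ : Paths G.V ⥤ Paths H.V).obj

/-- The action of a morphism of causal-nets on directed paths (morphisms). -/
def pmap (φ : G ⟶ H) {a b : G.V} (p : Quiver.Path a b) :
    Quiver.Path (vmap φ a) (vmap φ b) :=
  (φ : Paths G.V ⥤ Paths H.V).map p

/-- The quiver arrow corresponding to an edge. -/
def edgeHom (G : CausalNet) (e : G.E) : G.src e ⟶ G.tgt e := ⟨e, rfl, rfl⟩

/-- The directed path which is the image of the edge `e` under the morphism `φ`. -/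
def edgePath (φ : G ⟶ H) (e : G.E) :
    Quiver.Path (vmap φ (G.src e)) (vmap φ (G.tgt e)) :=
  pmap φ (Quiver.Hom.toPath (edgeHom G e))

/-- The underlying edge of a quiver arrow. -/
def homEdge {a b : G.V} (f : a ⟶ b) : G.E := Subtype.val f

/-- The list of edges traversed by a directed path. -/
def pathEdges : {a b : G.V} → Quiver.Path a b → List G.E
  | _, _, Quiver.Path.nil => []
  | _, _, Quiver.Path.cons p f => pathEdges p ++ [homEdge f]

/-- The list of vertices visited by a directed path (including endpoints). -/
def pathVertices : {a b : G.V} → Quiver.Path a b → List G.V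
  | a, _, Quiver.Path.nil => [a]
  | _, b, Quiver.Path.cons p _ => pathVertices p ++ [b]

/-- An edge `e` is a contraction of `φ` if `φ(e)` has length `0`. -/
def IsContractionEdge (φ : G ⟶ H) (e : G.E) : Prop := (edgePath φ e).length = 0

/-- An edge `e` is a segment of `φ` if `φ(e)` has length `1`. -/
def IsSegmentEdge (φ : G ⟶ H) (e : G.E) : Prop := (edgePath φ e).length = 1

/-- An edge `e` is a subdivision of `φ` if `φ(e)` has length at least `2`. -/
def IsSubdivisionEdge (φ : G ⟶ H) (e : G.E) : Prop := 2 ≤ (edgePath φ e).length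

/-- `φ` maps the edge `e` to the length-one path consisting of the edge `h`. -/
def MapsToEdge (φ : G ⟶ H) (e : G.E) (h : H.E) : Prop :=
  pathEdges (edgePath φ e) = [h]

/-- A quotient: a morphism with no null-vertex and no null-edge. -/
def IsQuotientMor (φ : G ⟶ H) : Prop :=
  (∀ v : H.V, ∃ w : G.V, vmap φ w = v) ∧ ∀ h : H.E, ∃ e : G.E, MapsToEdge φ e h

/-- A coarse-graining: a quotient with no subdivision. -/
def IsCoarseGraining (φ : G ⟶ H) : Prop :=
  IsQuotientMor φ ∧ ∀ e : G.E, ¬ IsSubdivisionEdge φ e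

/-- A vertex-coarse-graining: a coarse-graining with no multiple-edge. -/
def IsVertexCoarseGraining (φ : G ⟶ H) : Prop :=
  IsCoarseGraining φ ∧
  ∀ (h : H.E) (e₁ e₂ : G.E), MapsToEdge φ e₁ h → MapsToEdge φ e₂ h → e₁ = e₂

/-- An edge-coarse-graining: a coarse-graining with no multiple-vertex and no
contraction. -/
def IsEdgeCoarseGraining (φ : G ⟶ H) : Prop :=
  IsCoarseGraining φ ∧ Function.Injective (vmap φ) ∧ ∀ e : G.E, ¬ IsContractionEdge φ e

/-- A merging: a vertex-coarse-graining with no contraction. -/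
def IsMerging (φ : G ⟶ H) : Prop :=
  IsVertexCoarseGraining φ ∧ ∀ e : G.E, ¬ IsContractionEdge φ e

/-- A fusion: a coarse-graining with no contraction. -/
def IsFusion (φ : G ⟶ H) : Prop :=
  IsCoarseGraining φ ∧ ∀ e : G.E, ¬ IsContractionEdge φ e

/-- An inclusion: a morphism injective on vertices and on directed paths
(an injective-on-objects faithful functor). -/
def IsInclusion (φ : G ⟶ H) : Prop :=
  Function.Injective (vmap φ) ∧
  ∀ (a b : G.V) (p q : Quiver.Path a b), pmap φ p = pmap φ q → p = q

/-- An embedding: an inclusion with no subdivision. -/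
def IsEmbedding (φ : G ⟶ H) : Prop :=
  IsInclusion φ ∧ ∀ e : G.E, ¬ IsSubdivisionEdge φ e

/-- An immersion: an inclusion such that images of distinct subdivision edges
share no edge. -/
def IsImmersion (φ : G ⟶ H) : Prop :=
  IsInclusion φ ∧
  ∀ e₁ e₂ : G.E, e₁ ≠ e₂ → IsSubdivisionEdge φ e₁ → IsSubdivisionEdge φ e₂ →
    ∀ h : H.E, h ∈ pathEdges (edgePath φ e₁) → h ∉ pathEdges (edgePath φ e₂)

/-- The internal vertices of a directed path (all visited vertices except the
two endpoints). -/
def internalVertices {a b : G.V} (p : Quiver.Path a b) : List G.V :=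
  ((pathVertices p).dropLast).tail

/-- A strong morphism: all internal vertices of images of subdivision edges are
null-vertices. -/
def IsStrong (φ : G ⟶ H) : Prop :=
  ∀ e : G.E, IsSubdivisionEdge φ e →
    ∀ v ∈ internalVertices (edgePath φ e), ∀ w : G.V, vmap φ w ≠ v

/-- A vertex-disjoint morphism: images of distinct subdivision edges share no
internal vertex. -/
def IsVertexDisjoint (φ : G ⟶ H) : Prop :=
  ∀ e₁ e₂ : G.E, e₁ ≠ e₂ → IsSubdivisionEdge φ e₁ → IsSubdivisionEdge φ e₂ →
    ∀ v : H.V, v ∈ internalVertices (edgePath φ e₁) → v ∉ internalVertices (edgePath φ e₂)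

/-- A topological embedding: a strong vertex-disjoint inclusion. -/
def IsTopologicalEmbedding (φ : G ⟶ H) : Prop :=
  IsInclusion φ ∧ IsStrong φ ∧ IsVertexDisjoint φ

/-- The edge `e` covers the vertex `v` if `v` occurs on the path `φ(e)`. -/
def Covers (φ : G ⟶ H) (e : G.E) (v : H.V) : Prop :=
  v ∈ pathVertices (edgePath φ e)

/-- An isolated vertex: a vertex incident to no edge. -/
def IsolatedVertex (G : CausalNet) (v : G.V) : Prop :=
  ∀ e : G.E, G.src e ≠ v ∧ G.tgt e ≠ v

/-- A subdivision morphism: a topological embedding such that every non-isolated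
vertex of the codomain is covered and every isolated vertex of the codomain is a
simple-vertex. -/
def IsSubdivisionMor (φ : G ⟶ H) : Prop :=
  IsTopologicalEmbedding φ ∧
  (∀ v : H.V, ¬ IsolatedVertex H v → ∃ e : G.E, Covers φ e v) ∧
  (∀ v : H.V, IsolatedVertex H v → ∃! w : G.V, vmap φ w = v)

theorem mapPath_length {V W : Type} [Quiver V] [Quiver W] (F : V ⥤q W) :
    ∀ {a b : V} (p : Quiver.Path a b), (F.mapPath p).length = p.length := by
  intro a b p
  induction p with
  | nil => rfl
  | cons q f ih =>
      show ((F.mapPath q).cons (F.map f)).length = (q.cons f).length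
      rw [Quiver.Path.length_cons, Quiver.Path.length_cons, ih]

theorem noCycleData_of_map {V₁ E₁ : Type} (s₁ t₁ : E₁ → V₁) (G : CausalNet)
    (f : V₁ → G.V) (g : E₁ → G.E)
    (hs : ∀ e, G.src (g e) = f (s₁ e)) (ht : ∀ e, G.tgt (g e) = f (t₁ e)) :
    NoCycleData V₁ E₁ s₁ t₁ := by
  letI : Quiver V₁ := ⟨fun a b => { e : E₁ // s₁ e = a ∧ t₁ e = b }⟩
  intro v p
  let F : V₁ ⥤q G.V :=
    { obj := f
      map := fun {a b} e =>
        ⟨g (Subtype.val e), by rw [hs, (Subtype.prop e).1], by rw [ht, (Subtype.prop e).2]⟩ }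
  have h := G.acyclic (f v) (F.mapPath p)
  rw [mapPath_length] at h
  exact h

theorem noCycleData_of_lt {V E : Type} [Preorder V] (s t : E → V)
    (hlt : ∀ e, s e < t e) : NoCycleData V E s t := by
  letI : Quiver V := ⟨fun a b => { e : E // s e = a ∧ t e = b }⟩
  have key : ∀ {a b : V} (p : Quiver.Path a b), (a = b ∧ p.length = 0) ∨ a < b := by
    intro a b p
    induction p with
    | nil => exact Or.inl ⟨rfl, rfl⟩
    | cons q f ih =>
        have hcb := hlt (Subtype.val f)
        rw [(Subtype.prop f).1, (Subtype.prop f).2] at hcb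
        rcases ih with ⟨h, _⟩ | h
        · exact Or.inr (by rw [h]; exact hcb)
        · exact Or.inr (lt_trans h hcb)
  intro v p
  rcases key p with ⟨_, h⟩ | h
  · exact h
  · exact absurd h (lt_irrefl v)

/-- The sub-causal-net spanned by a set of vertices and a set of edges. -/
noncomputable def mkSub (G : CausalNet) (Vs : Set G.V) (Es : Set G.E)
    (hs : ∀ e ∈ Es, G.src e ∈ Vs) (ht : ∀ e ∈ Es, G.tgt e ∈ Vs) : CausalNet where
  V := Vs
  E := Es
  src e := ⟨G.src e.1, hs e.1 e.2⟩
  tgt e := ⟨G.tgt e.1, ht e.1 e.2⟩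
  fintypeV := Fintype.ofFinite _
  fintypeE := Fintype.ofFinite _
  acyclic := noCycleData_of_map _ _ G Subtype.val Subtype.val (fun _ => rfl) (fun _ => rfl)

/-- The fiber of a morphism at a vertex `v` of the codomain: the sub-causal-net
of the domain on the vertices mapped to `v` and the edges mapped to the identity
path at `v`. -/
noncomputable def fiber (φ : G ⟶ H) (v : H.V) : CausalNet :=
  mkSub G {w : G.V | vmap φ w = v}
    {e : G.E | IsContractionEdge φ e ∧ vmap φ (G.src e) = v}
    (fun _ he => he.2)
    (fun e he =>
      show vmap φ (G.tgt e) = v from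
        Quiver.Path.eq_of_length_zero (edgePath φ e) he.1 ▸ he.2)

/-- The underlying undirected (simple) graph of a causal-net. -/
def undirected (G : CausalNet) : SimpleGraph G.V where
  Adj v w := v ≠ w ∧ ∃ e : G.E, (G.src e = v ∧ G.tgt e = w) ∨ (G.src e = w ∧ G.tgt e = v)
  symm := by
    constructor
    rintro v w ⟨hne, e, he⟩
    exact ⟨hne.symm, e, he.symm⟩
  loopless := by
    constructor
    intro v h
    exact h.1 rfl

/-- A causal-net is connected if its underlying undirected graph is connected. -/
def Connected (G : CausalNet) : Prop := (undirected G).Connected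

/-- A causal-Tree: a causal-net whose simplification has a tree as underlying
undirected graph.  (Since a causal-net is acyclic, the underlying undirected
graph of its simplification is exactly `undirected G`.) -/
def IsCausalTree (G : CausalNet) : Prop := (undirected G).IsTree

/-- A contraction: a vertex-coarse-graining all of whose fibers are connected. -/
def IsContractionMor (φ : G ⟶ H) : Prop :=
  IsVertexCoarseGraining φ ∧ ∀ v : H.V, Connected (fiber φ v)

/-- A simple contraction: a contraction with exactly one non-trivial fiber, that
fiber consisting of two vertices together with all edges from the first to the
second. -/
def IsSimpleContraction (φ : G ⟶ H) : Prop :=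
  IsContractionMor φ ∧
  ∃ w₁ w₂ : G.V, w₁ ≠ w₂ ∧ vmap φ w₁ = vmap φ w₂ ∧
    (∃ e : G.E, G.src e = w₁ ∧ G.tgt e = w₂) ∧
    (∀ e : G.E, IsContractionEdge φ e ↔ (G.src e = w₁ ∧ G.tgt e = w₂)) ∧
    (∀ u u' : G.V, vmap φ u = vmap φ u' →
      u = u' ∨ ((u = w₁ ∨ u = w₂) ∧ (u' = w₁ ∨ u' = w₂)))

/-- A tree-contraction: a contraction all of whose fibers are causal-Trees. -/
def IsTreeContraction (φ : G ⟶ H) : Prop :=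
  IsContractionMor φ ∧ ∀ v : H.V, IsCausalTree (fiber φ v)

/-- A directed multi-path: a causal-net whose simplification is a directed path. -/
def IsDirectedMultiPath (K : CausalNet) : Prop :=
  ∃ (a b : K.V) (p : Quiver.Path a b),
    (pathVertices p).Nodup ∧ (∀ v : K.V, v ∈ pathVertices p) ∧
    ∀ e : K.E, ∃ h ∈ pathEdges p, K.src e = K.src h ∧ K.tgt e = K.tgt h

/-- A path-contraction: a vertex-coarse-graining all of whose fibers are
directed multi-paths. -/
def IsPathContraction (φ : G ⟶ H) : Prop :=
  IsVertexCoarseGraining φ ∧ ∀ v : H.V, IsDirectedMultiPath (fiber φ v)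

/-- A point: a causal-net with exactly one vertex and no edges. -/
def IsPoint (A : CausalNet) : Prop := (∃ v : A.V, ∀ w : A.V, w = v) ∧ IsEmpty A.E

/-- Reachability: there is a directed path from `a` to `b`. -/
def Reaches (G : CausalNet) (a b : G.V) : Prop := Nonempty (Quiver.Path a b)

/-- A coclique: a set of vertices no two distinct members of which are
comparable under the reachability order. -/
def IsCoclique (G : CausalNet) (S : Set G.V) : Prop :=
  ∀ a ∈ S, ∀ b ∈ S, a ≠ b → ¬ Reaches G a b

/-- A multi-edge: the nonempty set of all edges from one fixed vertex to another. -/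
def IsMultiEdge (G : CausalNet) (s : Set G.E) : Prop :=
  s.Nonempty ∧ ∃ a b : G.V, s = {e : G.E | G.src e = a ∧ G.tgt e = b}

/-- The pair of vertices whose multi-edge is contracted by a simple contraction. -/
def ContractedPair (φ : G ⟶ H) (w₁ w₂ : G.V) : Prop :=
  w₁ ≠ w₂ ∧ vmap φ w₁ = vmap φ w₂ ∧ (∃ e : G.E, G.src e = w₁ ∧ G.tgt e = w₂) ∧
  ∀ e : G.E, IsContractionEdge φ e ↔ (G.src e = w₁ ∧ G.tgt e = w₂)

/-- Two causal-nets are isomorphic in `Cau`. -/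
def IsIsomorphicTo (A B : CausalNet) : Prop := ∃ φ : A ⟶ B, IsIso φ

/-- A simple causal-net: at most one edge between any ordered pair of vertices. -/
def IsSimpleNet (G : CausalNet) : Prop :=
  ∀ e₁ e₂ : G.E, G.src e₁ = G.src e₂ → G.tgt e₁ = G.tgt e₂ → e₁ = e₂

/-- A harmonic causal-net: every fusion out of it is an isomorphism. -/
def Harmonic (G : CausalNet) : Prop :=
  ∀ (H : CausalNet) (φ : G ⟶ H), IsFusion φ → IsIso φ

/-- A hamiltonian path: a directed path visiting every vertex exactly once. -/
def HasHamiltonianPath (G : CausalNet) : Prop :=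
  ∃ (a b : G.V) (p : Quiver.Path a b),
    (pathVertices p).Nodup ∧ ∀ v : G.V, v ∈ pathVertices p

/-- Morphisms which can be written as a composition of finitely many morphisms
each satisfying `P`. -/
inductive IsCompOf (P : ∀ ⦃A B : CausalNet⦄, (A ⟶ B) → Prop) :
    ∀ {A B : CausalNet}, (A ⟶ B) → Prop
  | of {A B : CausalNet} (φ : A ⟶ B) : P φ → IsCompOf P φ
  | comp {A B C : CausalNet} (φ : A ⟶ B) (ψ : B ⟶ C) :
      IsCompOf P φ → IsCompOf P ψ → IsCompOf P (φ ≫ ψ)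

/-!
A morphism without contractions sends every path of positive length to a path of positive length,
so a path between two vertices of one fiber would become a directed cycle in the target.

Conversely, identify the coclique `S` to a single vertex and keep every edge. A directed cycle in
the result would have to leave `S` and come back to `S` through at least one edge of `G`, so some
vertex of `S` would reach a vertex of `S` by a nonempty path; as `G` is acyclic, these two vertices
would be distinct, which `S` being a coclique forbids. Formally, every edge strictly increases the
preorder "`a` reaches `b`, or `a` reaches `S` and `S` reaches `b`".
-/

open Quiver

theorem CausalNet.path_length_eq_zero_of_eq (G : CausalNet) {a b : G.V} (h : a = b)
    (p : Path a b) : p.length = 0 := by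
  subst h
  exact G.acyclic a p

theorem reachable_src_tgt (e : G.E) : Reachable (G.src e) (G.tgt e) :=
  (edgeHom G e).reachable

theorem not_reachable_tgt_src (e : G.E) : ¬ Reachable (G.tgt e) (G.src e) := fun ⟨p⟩ => by
  have h := G.acyclic _ ((edgeHom G e).toPath.comp p)
  rw [Path.length_comp, Path.length_toPath] at h
  omega

theorem length_le_length_pmap (φ : G ⟶ H) (hφ : ∀ e, ¬ IsContractionEdge φ e) {a b : G.V}
    (p : Path a b) : p.length ≤ (pmap φ p).length := by
  induction p with
  | nil => exact Nat.zero_le _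
  | cons p f ih =>
    obtain ⟨e, rfl, rfl⟩ := f
    have hcomp : pmap φ (p.cons (edgeHom G e)) = (pmap φ p).comp (edgePath φ e) :=
      (φ : Paths G.V ⥤ Paths H.V).map_comp p (edgeHom G e).toPath
    have he : (edgePath φ e).length ≠ 0 := hφ e
    change (p.cons (edgeHom G e)).length ≤ (pmap φ (p.cons (edgeHom G e))).length
    rw [hcomp, Path.length_comp, Path.length_cons]
    omega

theorem isCoclique_fiber (φ : G ⟶ H) (hφ : ∀ e, ¬ IsContractionEdge φ e) (v : H.V) :
    IsCoclique G {w | vmap φ w = v} := by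
  rintro a (rfl : vmap φ a = v) b hb hne ⟨p⟩
  have hcycle := H.path_length_eq_zero_of_eq hb.symm (pmap φ p)
  have hle := length_le_length_pmap φ hφ p
  exact hne (p.eq_of_length_zero (by omega))

theorem noCycleData_of_rank_lt {V E P : Type} [Preorder P] (s t : E → V) (r : V → P)
    (hr : ∀ e, r (s e) < r (t e)) : NoCycleData V E s t :=
  letI := Preorder.lift r
  noCycleData_of_lt s t hr

def collapseSetoid {α : Type*} (S : Set α) : Setoid α where
  r a b := a = b ∨ a ∈ S ∧ b ∈ S
  iseqv :=
    { refl := fun _ => .inl rfl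
      symm := by rintro a b (rfl | ⟨ha, hb⟩) <;> tauto
      trans := by rintro a b c (rfl | ⟨ha, hb⟩) (rfl | ⟨hb', hc⟩) <;> tauto }

theorem collapseSetoid_mk_eq_mk_iff {α : Type*} {S : Set α} {a s : α} (hs : s ∈ S) :
    Quotient.mk (collapseSetoid S) a = Quotient.mk _ s ↔ a ∈ S := by
  rw [Quotient.eq]
  exact ⟨by rintro (rfl | ⟨ha, -⟩) <;> assumption, fun ha => .inr ⟨ha, hs⟩⟩

/-- Reachability in `G` once all vertices of `S` are identified. -/
def ReachesModulo (G : CausalNet) (S : Set G.V) (a b : G.V) : Prop :=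
  Reachable a b ∨ (∃ s ∈ S, Reachable a s) ∧ ∃ t ∈ S, Reachable t b

@[reducible]
def reachesModuloPreorder (G : CausalNet) (S : Set G.V) : Preorder G.V where
  le := ReachesModulo G S
  le_refl a := .inl (.refl a)
  le_trans a b c := by
    rintro (hab | ⟨haS, t, ht, htb⟩) (hbc | ⟨⟨s, hs, hbs⟩, hSc⟩)
    · exact .inl (hab.trans hbc)
    · exact .inr ⟨⟨s, hs, hab.trans hbs⟩, hSc⟩
    · exact .inr ⟨haS, t, ht, htb.trans hbc⟩
    · exact .inr ⟨haS, hSc⟩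

theorem reachesModulo_of_rel {S : Set G.V} {a b : G.V} (h : collapseSetoid S a b) :
    ReachesModulo G S a b := by
  rcases h with rfl | ⟨ha, hb⟩
  · exact .inl .rfl
  · exact .inr ⟨⟨a, ha, .rfl⟩, b, hb, .rfl⟩

theorem IsCoclique.not_reachesModulo_tgt_src {S : Set G.V} (hS : IsCoclique G S) (e : G.E) :
    ¬ ReachesModulo G S (G.tgt e) (G.src e) := by
  rintro (h | ⟨⟨s, hs, hts⟩, t, ht, hsrc⟩)
  · exact not_reachable_tgt_src e h
  · by_cases hst : t = s
    · subst hst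
      exact not_reachable_tgt_src e (hts.trans hsrc)
    · exact hS t ht s hs hst (hsrc.trans ((reachable_src_tgt e).trans hts))

noncomputable def collapse (G : CausalNet) (S : Set G.V) (hS : IsCoclique G S) : CausalNet where
  V := Quotient (collapseSetoid S)
  E := G.E
  src e := Quotient.mk _ (G.src e)
  tgt e := Quotient.mk _ (G.tgt e)
  fintypeV := Fintype.ofFinite _
  fintypeE := inferInstance
  acyclic := by
    let := reachesModuloPreorder G S
    -- any representative will do, since identified vertices are `≤` each other both ways
    refine noCycleData_of_rank_lt _ _ Quotient.out fun e => ?_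
    calc (Quotient.mk _ (G.src e)).out ≤ G.src e := reachesModulo_of_rel (Quotient.mk_out _)
      _ < G.tgt e :=
        lt_of_le_not_ge (.inl (reachable_src_tgt e)) (hS.not_reachesModulo_tgt_src e)
      _ ≤ (Quotient.mk _ (G.tgt e)).out :=
        reachesModulo_of_rel ((collapseSetoid S).symm (Quotient.mk_out _))

def collapsePrefunctor (G : CausalNet) (S : Set G.V) (hS : IsCoclique G S) :
    G.V ⥤q (collapse G S hS).V where
  obj := Quotient.mk _
  map f := ⟨f.1, congrArg _ f.2.1, congrArg _ f.2.2⟩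

noncomputable def collapseMor (G : CausalNet) (S : Set G.V) (hS : IsCoclique G S) :
    G ⟶ collapse G S hS :=
  Cat.freeMap (collapsePrefunctor G S hS)

theorem pathEdges_toPath {a b : G.V} (f : a ⟶ b) : pathEdges f.toPath = [homEdge f] := by
  rw [Hom.toPath, pathEdges.eq_2, pathEdges.eq_1, List.nil_append]

theorem mapsToEdge_collapseMor_iff {S : Set G.V} (hS : IsCoclique G S) (e : G.E)
    (h : (collapse G S hS).E) :
    MapsToEdge (collapseMor G S hS) e h ↔ e = h := by
  have hedges : pathEdges (edgePath (collapseMor G S hS) e) = [e] := pathEdges_toPath _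
  rw [MapsToEdge, hedges]
  exact List.singleton_inj

theorem isMerging_collapseMor {S : Set G.V} (hS : IsCoclique G S) :
    IsMerging (collapseMor G S hS) := by
  have hlen (e : G.E) : (edgePath (collapseMor G S hS) e).length = 1 := rfl
  refine ⟨⟨⟨⟨Quotient.ind fun w => ⟨w, rfl⟩, fun h => ⟨h, ?_⟩⟩, fun e => ?_⟩, ?_⟩, fun e => ?_⟩
  · exact (mapsToEdge_collapseMor_iff hS h h).2 rfl
  · have := hlen e
    unfold IsSubdivisionEdge
    omega
  · intro h e₁ e₂ h₁ h₂
    rw [mapsToEdge_collapseMor_iff] at h₁ h₂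
    exact h₁.trans h₂.symm
  · have := hlen e
    unfold IsContractionEdge
    omega

theorem fiber_collapseMor {S : Set G.V} (hS : IsCoclique G S) {s : G.V} (hs : s ∈ S) :
    {w | vmap (collapseMor G S hS) w = vmap (collapseMor G S hS) s} = S :=
  Set.ext fun _ => collapseSetoid_mk_eq_mk_iff hs

theorem merging_fiber_iff_coclique (G : CausalNet) (S : Set G.V) (hS : S.Nonempty) :
    (∃ (H : CausalNet) (φ : G ⟶ H) (v : H.V),
        IsMerging φ ∧ S = {w : G.V | vmap φ w = v}) ↔ IsCoclique G S := by
  refine ⟨fun ⟨H, φ, v, hφ, hSv⟩ => hSv ▸ isCoclique_fiber φ hφ.2 v, fun hcoc => ?_⟩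
  obtain ⟨s, hs⟩ := hS
  exact ⟨collapse G S hcoc, collapseMor G S hcoc, _, isMerging_collapseMor hcoc,
    (fiber_collapseMor hcoc hs).symm⟩

end CausalNets
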